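/- For every real ν with sin(νπ/2) ≠ 0 and every z > 0, s_{1,ν}(z) = (z/sin(νπ/2)) ∫₀^{π/2} sin(z cos θ) sin(νθ) sin θ dθ. -/

import Mathlib

/-!
Expand `sin (z cos θ)` in its Taylor series and integrate termwise. The moments
`S n = ∫ cos θ ^ n * sin θ * sin (ν θ)` and `C n = ∫ cos θ ^ n * cos (ν θ)` over `[0, π/2]` are
linked by integration by parts: `(n + 1) S n = ν C (n + 1)` and
`ν S (n + 1) = (n + 2) C (n + 2) - (n + 1) C n`. Hence
`((n + 2)² - ν²) C (n + 2) = (n + 2) (n + 1) C n`, and with `ν C 0 = sin (νπ/2)` this gives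
`∏_{j ≤ k} ((2j + 2)² - ν²) · S (2k + 1) = (2k + 1)! sin (νπ/2)`. As `sin (νπ/2) ≠ 0`, the
product is nonzero, and dividing by it turns the `k`-th term of the integrated series into the
`k`-th term of `s_{1,ν}(z)`.
-/

open Real

/-- The Lommel function `s_{μ,ν}(z)`, defined for `z > 0` by its convergent series. -/
noncomputable def lommelS (μ ν z : ℝ) : ℝ :=
  ∑' k : ℕ, (-1 : ℝ) ^ k * z ^ (μ + 2 * (k : ℝ) + 1) /
    ∏ j ∈ Finset.range (k + 1), ((μ + 2 * (j : ℝ) + 1) ^ 2 - ν ^ 2)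

open intervalIntegral
open scoped Nat

noncomputable def cosPowCosIntegral (ν : ℝ) (n : ℕ) : ℝ :=
  ∫ θ in 0..π / 2, cos θ ^ n * cos (ν * θ)

noncomputable def cosPowSinSinIntegral (ν : ℝ) (n : ℕ) : ℝ :=
  ∫ θ in 0..π / 2, cos θ ^ n * sin θ * sin (ν * θ)

lemma hasDerivAt_cos_pow_succ (n : ℕ) (x : ℝ) :
    HasDerivAt (fun θ => cos θ ^ (n + 1)) (-((n + 1) * cos x ^ n * sin x)) x :=
  ((hasDerivAt_cos x).fun_pow (n + 1)).congr_deriv (by push_cast [Nat.add_sub_cancel]; ring)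

lemma succ_mul_cosPowSinSinIntegral (ν : ℝ) (n : ℕ) :
    (n + 1) * cosPowSinSinIntegral ν n = ν * cosPowCosIntegral ν (n + 1) := by
  have hu : ∀ x ∈ Set.uIcc 0 (π / 2), HasDerivAt (fun θ => -cos θ ^ (n + 1))
      ((n + 1) * cos x ^ n * sin x) x := fun x _ => by
    simpa using (hasDerivAt_cos_pow_succ n x).fun_neg
  have hv : ∀ x ∈ Set.uIcc 0 (π / 2), HasDerivAt (fun θ => sin (ν * θ))
      (ν * cos (ν * x)) x := fun x _ => by
    simpa [mul_comm] using ((hasDerivAt_id x).const_mul ν).sin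
  have parts := integral_deriv_mul_eq_sub hu hv
    (Continuous.intervalIntegrable (by fun_prop) _ _)
    (Continuous.intervalIntegrable (by fun_prop) _ _)
  simp only [cos_pi_div_two, ne_eq, add_eq_zero, one_ne_zero, and_false, not_false_eq_true,
    zero_pow, neg_zero, zero_mul, mul_zero, sin_zero, sub_zero] at parts
  rw [cosPowSinSinIntegral, cosPowCosIntegral, ← integral_const_mul, ← integral_const_mul,
    ← sub_eq_zero, ← integral_sub]
  · exact (integral_congr fun x _ => by ring).trans parts
  all_goals exact Continuous.intervalIntegrable (by fun_prop) _ _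

lemma mul_cosPowSinSinIntegral_succ (ν : ℝ) (n : ℕ) :
    ν * cosPowSinSinIntegral ν (n + 1) =
      (n + 2) * cosPowCosIntegral ν (n + 2) - (n + 1) * cosPowCosIntegral ν n := by
  have hu : ∀ x ∈ Set.uIcc 0 (π / 2), HasDerivAt (fun θ => cos θ ^ (n + 1) * sin θ)
      ((n + 2) * cos x ^ (n + 2) - (n + 1) * cos x ^ n) x := fun x _ =>
    ((hasDerivAt_cos_pow_succ n x).mul (hasDerivAt_sin x)).congr_deriv
      (by linear_combination (-(n + 1) * cos x ^ n) * sin_sq x)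
  have hv : ∀ x ∈ Set.uIcc 0 (π / 2), HasDerivAt (fun θ => -cos (ν * θ))
      (ν * sin (ν * x)) x := fun x _ => by
    simpa [mul_comm] using ((hasDerivAt_id x).const_mul ν).cos.fun_neg
  have parts := integral_deriv_mul_eq_sub hu hv
    (Continuous.intervalIntegrable (by fun_prop) _ _)
    (Continuous.intervalIntegrable (by fun_prop) _ _)
  simp only [cos_pi_div_two, ne_eq, add_eq_zero, one_ne_zero, and_false, not_false_eq_true,
    zero_pow, zero_mul, sin_zero, mul_zero, sub_zero] at parts
  rw [cosPowSinSinIntegral, cosPowCosIntegral, cosPowCosIntegral, ← integral_const_mul,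
    ← integral_const_mul, ← integral_const_mul, ← sub_eq_zero, ← integral_sub, ← integral_sub]
  · exact (integral_congr fun x _ => by ring).trans parts
  all_goals exact Continuous.intervalIntegrable (by fun_prop) _ _

lemma mul_cosPowCosIntegral_zero (ν : ℝ) : ν * cosPowCosIntegral ν 0 = sin (ν * π / 2) := by
  have h : ∀ x ∈ Set.uIcc 0 (π / 2), HasDerivAt (fun θ => sin (ν * θ)) (ν * cos (ν * x)) x :=
    fun x _ => by simpa [mul_comm] using ((hasDerivAt_id x).const_mul ν).sin
  rw [cosPowCosIntegral, ← integral_const_mul]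
  simp only [pow_zero, one_mul]
  rw [integral_eq_sub_of_hasDerivAt h (Continuous.intervalIntegrable (by fun_prop) _ _)]
  simp [mul_div_assoc]

lemma cosPowCosIntegral_add_two (ν : ℝ) (n : ℕ) :
    ((n + 2) ^ 2 - ν ^ 2) * cosPowCosIntegral ν (n + 2) =
      (n + 2) * (n + 1) * cosPowCosIntegral ν n := by
  have h₁ := succ_mul_cosPowSinSinIntegral ν (n + 1)
  have h₂ := mul_cosPowSinSinIntegral_succ ν n
  push_cast at h₁
  linear_combination ν * h₁ - (n + 2) * h₂

lemma mul_prod_mul_cosPowCosIntegral_two_mul (ν : ℝ) (k : ℕ) :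
    ν * (∏ j ∈ Finset.range k, ((2 * j + 2 : ℝ) ^ 2 - ν ^ 2)) * cosPowCosIntegral ν (2 * k) =
      (2 * k)! * sin (ν * π / 2) := by
  induction k with
  | zero => simpa using mul_cosPowCosIntegral_zero ν
  | succ k ih =>
    have hrec := cosPowCosIntegral_add_two ν (2 * k)
    rw [show 2 * (k + 1) = 2 * k + 1 + 1 by ring, Nat.factorial_succ, Nat.factorial_succ,
      Finset.prod_range_succ]
    push_cast at hrec ⊢
    linear_combination (ν * ∏ j ∈ Finset.range k, ((2 * j + 2 : ℝ) ^ 2 - ν ^ 2)) * hrec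
      + (2 * k + 2) * (2 * k + 1) * ih

lemma prod_mul_cosPowSinSinIntegral_two_mul_add_one (ν : ℝ) (k : ℕ) :
    (∏ j ∈ Finset.range (k + 1), ((2 * j + 2 : ℝ) ^ 2 - ν ^ 2)) *
        cosPowSinSinIntegral ν (2 * k + 1) = (2 * k + 1)! * sin (ν * π / 2) := by
  have hS := succ_mul_cosPowSinSinIntegral ν (2 * k + 1)
  have hC := mul_prod_mul_cosPowCosIntegral_two_mul ν (k + 1)
  rw [show 2 * (k + 1) = 2 * k + 1 + 1 by ring, Nat.factorial_succ] at hC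
  refine mul_left_cancel₀ (by positivity : (2 * k + 2 : ℝ) ≠ 0) ?_
  push_cast at hS hC
  linear_combination (∏ j ∈ Finset.range (k + 1), ((2 * j + 2 : ℝ) ^ 2 - ν ^ 2)) * hS + hC

lemma hasSum_intervalIntegral_sin_comp_mul {a b M : ℝ} {g f : ℝ → ℝ} (hg : Continuous g)
    (hgM : ∀ x, |g x| ≤ M) (hf : Continuous f) :
    HasSum (fun k : ℕ => (-1) ^ k / (2 * k + 1)! * ∫ x in a..b, g x ^ (2 * k + 1) * f x)
      (∫ x in a..b, sin (g x) * f x) := by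
  have hM : Summable fun k : ℕ => M ^ (2 * k + 1) / (2 * k + 1)! :=
    (Real.summable_pow_div_factorial M).comp_injective fun i j h => by simpa using h
  have hsum := hasSum_integral_of_dominated_convergence
    (μ := MeasureTheory.volume) (a := a) (b := b) (f := fun x => sin (g x) * f x)
    (F := fun k x => (-1) ^ k * g x ^ (2 * k + 1) / (2 * k + 1)! * f x)
    (fun k x => M ^ (2 * k + 1) / (2 * k + 1)! * |f x|)
    (fun k => (by fun_prop : Continuous _).aestronglyMeasurable)
    (fun k => MeasureTheory.ae_of_all _ fun x _ => ?_)
    (MeasureTheory.ae_of_all _ fun x _ => hM.mul_right |f x|)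
    (by simp_rw [tsum_mul_right]; exact Continuous.intervalIntegrable (by fun_prop) _ _)
    (MeasureTheory.ae_of_all _ fun x _ => (Real.hasSum_sin (g x)).mul_right (f x))
  · refine hsum.congr_fun fun k => ?_
    rw [← integral_const_mul]
    exact integral_congr fun x _ => by ring
  · simp only [norm_mul, norm_div, norm_pow, norm_neg, norm_one, one_pow, one_mul,
      Real.norm_eq_abs, Nat.abs_cast]
    gcongr
    exact hgM x

lemma integral_mul_cos_pow_mul_sin_mul_sin (ν z : ℝ) (n : ℕ) :
    ∫ θ in 0..π / 2, (z * cos θ) ^ n * (sin (ν * θ) * sin θ) =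
      z ^ n * cosPowSinSinIntegral ν n := by
  rw [cosPowSinSinIntegral, ← integral_const_mul]
  exact integral_congr fun θ _ => by ring

theorem stmt13 (ν : ℝ) (hν : Real.sin (ν * π / 2) ≠ 0) (z : ℝ) :
    lommelS 1 ν z = (z / Real.sin (ν * π / 2)) *
      ∫ θ in (0:ℝ)..(π / 2), Real.sin (z * Real.cos θ) * Real.sin (ν * θ) * Real.sin θ := by
  have hseries := hasSum_intervalIntegral_sin_comp_mul (a := 0) (b := π / 2)
    (g := fun θ => z * cos θ) (f := fun θ => sin (ν * θ) * sin θ) (M := |z|) (by fun_prop)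
    (fun θ => by simpa [abs_mul] using mul_le_of_le_one_right (abs_nonneg z) (abs_cos_le_one θ))
    (by fun_prop)
  simp only [integral_mul_cos_pow_mul_sin_mul_sin] at hseries
  rw [integral_congr fun θ _ => mul_assoc _ _ _, ← hseries.tsum_eq, ← tsum_mul_left, lommelS]
  refine tsum_congr fun k => ?_
  have hS := prod_mul_cosPowSinSinIntegral_two_mul_add_one ν k
  have hP : ∏ j ∈ Finset.range (k + 1), ((2 * j + 2 : ℝ) ^ 2 - ν ^ 2) ≠ 0 := fun h => by
    simp [h, hν, Nat.factorial_ne_zero] at hS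
  have hprod : ∏ j ∈ Finset.range (k + 1), ((1 + 2 * j + 1 : ℝ) ^ 2 - ν ^ 2) =
      ∏ j ∈ Finset.range (k + 1), ((2 * j + 2 : ℝ) ^ 2 - ν ^ 2) :=
    Finset.prod_congr rfl fun j _ => by ring
  rw [hprod, show (1 : ℝ) + 2 * k + 1 = (2 * k + 1 + 1 : ℕ) by push_cast; ring, rpow_natCast]
  generalize ∏ j ∈ Finset.range (k + 1), ((2 * j + 2 : ℝ) ^ 2 - ν ^ 2) = P at hS hP ⊢
  field_simp
  linear_combination -z ^ (2 * k + 2) * hS
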